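/- arXiv:1010.3569 — 3 statements merged into one kernel-verified Lean document; each statement's English description precedes it below -/
import Mathlib

section
/- Let 𝔤 be a Lie algebra, 𝔨 its underlying 'fibre' data, and suppose κ : 𝔤 × 𝔤 → V is a symmetric bilinear form invariant under a linear map ∇ : 𝔤 → Ω (a 'connection') satisfying the Leibniz rule ∇[ξ,η] = [∇ξ,η] + [ξ,∇η] (bracket extended Ω-bilinearly), and let d : V-valued forms obey dκ(ξ,η) = κ(∇ξ,η) + κ(ξ,∇η). Then ω(η,ξ) := κ(η,∇ξ) mod dV defines a Lie algebra 2-cocycle on 𝔤 with values in Ω¹/dΩ⁰, i.e., ω is bilinear, ω(ξ,ξ) ∈ dΩ⁰ (so it is alternating in the quotient), and ω([ξ,η],ζ) + ω([η,ζ],ξ) + ω([ζ,ξ],η) ∈ dΩ⁰. -/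
/-- Abstract construction of the canonical gauge cocycle.  Let `𝔤` be a real Lie algebra,
`Ω⁰` (functions) and `Ω¹` (one-forms) real vector spaces with `d : Ω⁰ → Ω¹`,
`κ : 𝔤 × 𝔤 → Ω⁰` a symmetric ad-invariant bilinear form, `K : 𝔤 × Ω¹ → Ω¹` its extension
to one-form-valued arguments (`K ξ Ξ = κ(ξ,Ξ)`), `b : 𝔤 × Ω¹ → Ω¹` the extended bracket
(`b ξ Ξ = [ξ,Ξ]`), and `∇ : 𝔤 → Ω¹` a connection satisfying the Leibniz rule
`∇[ξ,η] = [∇ξ,η] + [ξ,∇η]` and the compatibility `d κ(ξ,η) = κ(∇ξ,η) + κ(ξ,∇η)`.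
Then `ω(η,ξ) := κ(η,∇ξ) mod dΩ⁰` is a Lie algebra 2-cocycle with values in `Ω¹/dΩ⁰`:
`ω(ξ,ξ) ∈ dΩ⁰` and `ω([ξ,η],ζ) + ω([η,ζ],ξ) + ω([ζ,ξ],η) ∈ dΩ⁰`. -/
theorem canonical_cocycle_is_cocycle
    (𝔤 : Type*) [LieRing 𝔤] [LieAlgebra ℝ 𝔤]
    (Ω0 Ω1 : Type*) [AddCommGroup Ω0] [Module ℝ Ω0] [AddCommGroup Ω1] [Module ℝ Ω1]
    (d : Ω0 →ₗ[ℝ] Ω1)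
    (κ : 𝔤 →ₗ[ℝ] 𝔤 →ₗ[ℝ] Ω0)
    (K : 𝔤 →ₗ[ℝ] Ω1 →ₗ[ℝ] Ω1)
    (b : 𝔤 →ₗ[ℝ] Ω1 →ₗ[ℝ] Ω1)
    (nab : 𝔤 →ₗ[ℝ] Ω1)
    (hκsymm : ∀ ξ η : 𝔤, κ ξ η = κ η ξ)
    (hκinv : ∀ ζ ξ η : 𝔤, κ ⁅ζ, ξ⁆ η + κ ξ ⁅ζ, η⁆ = 0)
    -- invariance of the extended pairing `K`
    (hKinv : ∀ (ζ ξ : 𝔤) (Ξ : Ω1), K ⁅ζ, ξ⁆ Ξ + K ξ (b ζ Ξ) = 0)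
    -- Leibniz rule: `∇[ξ,η] = [∇ξ,η] + [ξ,∇η] = b ξ (∇η) − b η (∇ξ)`
    (hLeibniz : ∀ ξ η : 𝔤, nab ⁅ξ, η⁆ = b ξ (nab η) - b η (nab ξ))
    -- `d κ(ξ,η) = κ(∇ξ,η) + κ(ξ,∇η)`
    (hdκ : ∀ ξ η : 𝔤, d (κ ξ η) = K η (nab ξ) + K ξ (nab η)) :
    (∀ ξ : 𝔤, K ξ (nab ξ) ∈ LinearMap.range d) ∧
    (∀ ξ η ζ : 𝔤,
      K ⁅ξ, η⁆ (nab ζ) + K ⁅η, ζ⁆ (nab ξ) + K ⁅ζ, ξ⁆ (nab η) ∈ LinearMap.range d) := by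
  have hK : ∀ (ζ ξ : 𝔤) (Ξ : Ω1), K ζ (b ξ Ξ) = K ⁅ζ, ξ⁆ Ξ := by
    intro ζ ξ Ξ
    have h := hKinv ξ ζ Ξ
    have h2 : (⁅ξ, ζ⁆ : 𝔤) = -⁅ζ, ξ⁆ := by rw [← lie_skew]
    rw [h2, map_neg, LinearMap.neg_apply, neg_add_eq_zero] at h
    exact h.symm
  constructor
  · intro ξ
    refine ⟨(2⁻¹ : ℝ) • κ ξ ξ, ?_⟩
    rw [map_smul, hdκ, smul_add, ← add_smul]
    norm_num
  · intro ξ η ζ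
    refine ⟨κ ⁅ξ, η⁆ ζ, ?_⟩
    rw [hdκ, hLeibniz, map_sub, hK ζ ξ (nab η), hK ζ η (nab ξ)]
    have h2 : (⁅ζ, η⁆ : 𝔤) = -⁅η, ζ⁆ := by rw [← lie_skew]
    rw [h2, map_neg, LinearMap.neg_apply]
    abel
end

section
/- Let L be a Lie algebra and ξ, η ∈ L. Suppose η = Σⱼ [μⱼ, νⱼ] is a finite sum of brackets with [ξ, μⱼ] = 0 and [ξ, νⱼ] = 0 for all j. Then every 2-cocycle ψ on L with values in a trivial module satisfies ψ(ξ, η) = 0. -/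
/-- Algebraic core of diagonality of 2-cocycles on section algebras: if
`η = Σⱼ ⁅μⱼ, νⱼ⁆` is a finite sum of brackets with `⁅ξ, μⱼ⁆ = 0` and `⁅ξ, νⱼ⁆ = 0`
for all `j`, then every 2-cocycle `ψ` (values in a trivial module, not assumed
continuous) satisfies `ψ ξ η = 0`. -/
theorem cocycle_diagonal_core (k : Type*) [Field k]
    (L : Type*) [LieRing L] [LieAlgebra k L]
    (X : Type*) [AddCommGroup X] [Module k X]
    (ψ : L →ₗ[k] L →ₗ[k] X)
    (halt : ∀ a : L, ψ a a = 0)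
    (hcoc : ∀ a b c : L, ψ ⁅a, b⁆ c + ψ ⁅b, c⁆ a + ψ ⁅c, a⁆ b = 0)
    (ξ η : L) (n : ℕ) (μ ν : Fin n → L)
    (hη : η = ∑ j, ⁅μ j, ν j⁆)
    (hμ : ∀ j, ⁅ξ, μ j⁆ = 0) (hν : ∀ j, ⁅ξ, ν j⁆ = 0) :
    ψ ξ η = 0 := by
  have hskew : ∀ a b : L, ψ a b = -ψ b a := by
    intro a b
    have h := halt (a + b)
    simp only [map_add, LinearMap.add_apply, halt] at h
    rw [eq_neg_iff_add_eq_zero]; abel_nf; abel_nf at h; rw [add_comm]; exact h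
  subst hη
  rw [map_sum]
  refine Finset.sum_eq_zero fun j _ => ?_
  have h := hcoc (μ j) (ν j) ξ
  have h1 : ⁅ν j, ξ⁆ = 0 := by rw [← lie_skew, hν j, neg_zero]
  have h2 : ⁅ξ, μ j⁆ = 0 := hμ j
  rw [h1, h2] at h
  simp only [map_zero, LinearMap.zero_apply, add_zero] at h
  rw [hskew, h, neg_zero]
end

section
/- Abelian gluing of cocycle trivializations: Let L be a Lie algebra, X a trivial module, ψ a diagonal 2-cocycle on L, and suppose L admits a family of 'localization' operators: an index set I, linear maps m_i : L → L (multiplication by a partition of unity λ_i) with Σ_i m_i = id pointwise-finitely, and for each i a linear map β_i : L → X such that ψ(m_i ξ, η') = β_i([m_i ξ, η']) whenever η' lies in the 'support ideal' of i. Suppose moreover that for each i there is m'_i with ψ(m_i ξ, η) = ψ(m_i ξ, m'_i η), and that the compatibility λ_i λ'_i = λ_i holds, so that β_i([m_i ξ, m'_i η]) = β_i(m_i [ξ,η]). Then ψ is the coboundary of β(χ) := Σ_i β_i(m_i χ). -/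
/-- Abelian gluing of cocycle trivialisations: let `ψ` be a (diagonal) 2-cocycle on a Lie
algebra `L` with values in a trivial module `X`, and suppose `L` admits localisation
operators `m_i` (multiplication by a partition of unity `λ_i`, so `Σ_i m_i = id` with
pointwise finitely many nonzero terms), cut-off operators `m'_i` (multiplication by `λ'_i`
with `λ_i λ'_i = λ_i`) with `ψ(m_i ξ, η) = ψ(m_i ξ, m'_i η)` (diagonality), and local
trivialisations `β_i` with `ψ(m_i ξ, η') = β_i([m_i ξ, η'])` for `η'` in the support
ideal of `i`, compatibly: `β_i([m_i ξ, m'_i η]) = β_i(m_i [ξ,η])`.  Then `ψ` is the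
coboundary of `β(χ) := Σ_i β_i(m_i χ)`.  (Concretely: a 2-cocycle on `Γ_c(𝔎|_U)` that is
a coboundary on each member of an open cover is a coboundary.) -/
theorem cocycle_gluing (k : Type*) [Field k]
    (L : Type*) [LieRing L] [LieAlgebra k L]
    (X : Type*) [AddCommGroup X] [Module k X]
    (ψ : L →ₗ[k] L →ₗ[k] X)
    (halt : ∀ a : L, ψ a a = 0)
    (hcoc : ∀ a b c : L, ψ ⁅a, b⁆ c + ψ ⁅b, c⁆ a + ψ ⁅c, a⁆ b = 0)
    (I : Type*) (m m' : I → L →ₗ[k] L) (β : I → L →ₗ[k] X)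
    -- `Σ_i m_i = id`, pointwise finitely
    (hfin : ∀ χ : L, (Function.support fun i => m i χ).Finite)
    (hsum : ∀ χ : L, ∑ᶠ i, m i χ = χ)
    -- diagonality: `m'_i η` agrees with `η` near the support of `m_i ξ`
    (hdiag : ∀ (i : I) (ξ η : L), ψ (m i ξ) η = ψ (m i ξ) (m' i η))
    -- local trivialisation of `ψ` over the `i`-th patch
    (hβ : ∀ (i : I) (ξ η : L), ψ (m i ξ) (m' i η) = β i ⁅m i ξ, m' i η⁆)
    -- compatibility `λ_i λ'_i = λ_i`
    (hcompat : ∀ (i : I) (ξ η : L), β i ⁅m i ξ, m' i η⁆ = β i (m i ⁅ξ, η⁆)) :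
    ∀ ξ η : L, ψ ξ η = ∑ᶠ i, β i (m i ⁅ξ, η⁆) := by
  intro ξ η
  have h1 : ∀ i, β i (m i ⁅ξ, η⁆) = (ψ.flip η) (m i ξ) := by
    intro i
    simp only [LinearMap.flip_apply]
    rw [hdiag, hβ, hcompat]
  calc ψ ξ η = (ψ.flip η) (∑ᶠ i, m i ξ) := by rw [hsum]; rfl
    _ = ∑ᶠ i, (ψ.flip η) (m i ξ) := (ψ.flip η).toAddMonoidHom.map_finsum_plift (fun i => m i ξ) ((hfin ξ).preimage (Equiv.plift.injective.injOn))
    _ = ∑ᶠ i, β i (m i ⁅ξ, η⁆) := (finsum_congr h1).symm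
end
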